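/- (Theorem 2, first part.) Let M ≥ 1 and for m = 1,…,M let F^{(m)} : ℝ^k → ℝ^c be differentiable at θ ∈ ℝ^k with θ ≠ 0 and positively homogeneous of first degree, and let y^{(m)} ∈ ℝ^c satisfy Σ_i y^{(m)}_i = 1. Define the average loss ℓ_avg(θ) := (1/M) Σ_{m=1}^M ℓ(F^{(m)}(θ), y^{(m)}), and write z^{(m)} = F^{(m)}(θ) with softmax p^{(m)}. Then the Euclidean norm of the gradient of ℓ_avg at θ is at least (1/(M‖θ‖)) Σ_{m=1}^M (ℓ(z^{(m)}, y^{(m)}) − H(p^{(m)})). -/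

import Mathlib

/-- A function between real vector spaces is *positively homogeneous of first degree*
if `f (α • x) = α • f x` for every `x` and every `α > 0`. -/
def PositivelyHomogeneous {m n : ℕ}
    (f : EuclideanSpace ℝ (Fin m) → EuclideanSpace ℝ (Fin n)) : Prop :=
  ∀ (x : EuclideanSpace ℝ (Fin m)) (α : ℝ), 0 < α → f (α • x) = α • f x

/-- `logsumexp z = log (∑ i, exp (z i))`. -/
noncomputable def logsumexp {c : ℕ} (z : EuclideanSpace ℝ (Fin c)) : ℝ :=
  Real.log (∑ i, Real.exp (z i))

/-- The softmax probabilities of a logit vector `z`. -/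
noncomputable def softmax {c : ℕ} (z : EuclideanSpace ℝ (Fin c)) :
    EuclideanSpace ℝ (Fin c) :=
  WithLp.toLp 2 (fun i => Real.exp (z i) / ∑ k, Real.exp (z k))

/-- The Shannon entropy `H(p) = -∑ i, p i * log (p i)`. -/
noncomputable def shannonEntropy {c : ℕ} (p : EuclideanSpace ℝ (Fin c)) : ℝ :=
  -∑ i, p i * Real.log (p i)

/-- The cross-entropy loss `ℓ(z, y) = -∑ i, y i * (z i - logsumexp z)`. -/
noncomputable def crossEntropyLoss {c : ℕ} (z y : EuclideanSpace ℝ (Fin c)) : ℝ :=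
  -∑ i, y i * (z i - logsumexp z)

open Real Filter Topology RealInnerProductSpace

lemma ce_diff {c : ℕ} (hc : 0 < c) (y : EuclideanSpace ℝ (Fin c))
    (z₀ : EuclideanSpace ℝ (Fin c)) :
    DifferentiableAt ℝ (fun z => crossEntropyLoss z y) z₀ := by
  have hproj : ∀ i, DifferentiableAt ℝ (fun z : EuclideanSpace ℝ (Fin c) => z i) z₀ :=
    fun i => (EuclideanSpace.proj i : EuclideanSpace ℝ (Fin c) →L[ℝ] ℝ).differentiableAt
  have hsum : DifferentiableAt ℝ
      (fun z : EuclideanSpace ℝ (Fin c) => ∑ i, Real.exp (z i)) z₀ :=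
    DifferentiableAt.fun_sum fun i _ => (Real.differentiable_exp _).comp z₀ (hproj i)
  have hpos : (0:ℝ) < ∑ i, Real.exp (z₀ i) :=
    Finset.sum_pos (fun i _ => Real.exp_pos _) (by simpa using Finset.univ_nonempty_iff.2 ⟨⟨0, hc⟩⟩)
  have hlse : DifferentiableAt ℝ (fun z : EuclideanSpace ℝ (Fin c) => logsumexp z) z₀ :=
    hsum.log (ne_of_gt hpos)
  unfold crossEntropyLoss
  exact (DifferentiableAt.fun_sum fun i _ =>
    (((hproj i).sub hlse).const_mul (y i))).neg

lemma ce_scal_hasDerivAt {c : ℕ} (hc : 0 < c) (z y : EuclideanSpace ℝ (Fin c))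
    (hy : ∑ i, y i = 1) :
    HasDerivAt (fun t : ℝ => crossEntropyLoss (t • z) y)
      (crossEntropyLoss z y - shannonEntropy (softmax z)) 1 := by
  have hne : (Finset.univ : Finset (Fin c)).Nonempty := Finset.univ_nonempty_iff.2 ⟨⟨0, hc⟩⟩
  have hEpos : ∀ t : ℝ, (0:ℝ) < ∑ k, Real.exp (t * z k) :=
    fun t => Finset.sum_pos (fun k _ => Real.exp_pos _) hne
  have hfun : (fun t : ℝ => crossEntropyLoss (t • z) y) =
      fun t => -∑ i, y i * (t * z i - Real.log (∑ k, Real.exp (t * z k))) := by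
    funext t
    simp [crossEntropyLoss, logsumexp, PiLp.smul_apply, smul_eq_mul]
  rw [hfun]
  have hS : HasDerivAt (fun t : ℝ => ∑ k, Real.exp (t * z k))
      (∑ k, Real.exp (1 * z k) * z k) 1 :=
    HasDerivAt.fun_sum fun k _ => (hasDerivAt_mul_const (z k)).exp
  have hL : HasDerivAt (fun t : ℝ => Real.log (∑ k, Real.exp (t * z k)))
      ((∑ k, Real.exp (1 * z k) * z k) / (∑ k, Real.exp (1 * z k))) 1 := by
    have := hS.log (ne_of_gt (hEpos 1))
    simpa using this
  have hmain : HasDerivAt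
      (fun t : ℝ => -∑ i, y i * (t * z i - Real.log (∑ k, Real.exp (t * z k))))
      (-∑ i, y i * (z i - (∑ k, Real.exp (1 * z k) * z k) / (∑ k, Real.exp (1 * z k)))) 1 :=
    (HasDerivAt.fun_sum fun i _ =>
      (((hasDerivAt_mul_const (z i)).sub hL).const_mul (y i))).neg
  convert hmain using 1
  set E : ℝ := ∑ k, Real.exp (z k) with hE
  have hEpos' : (0:ℝ) < E := by simpa [hE] using hEpos 1
  have h1E : ∀ k, Real.exp ((1:ℝ) * z k) = Real.exp (z k) := by intro k; rw [one_mul]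
  have hlogsm : ∀ i, Real.log (softmax z i) = z i - Real.log E := by
    intro i
    simp only [softmax, PiLp.toLp_apply]
    rw [Real.log_div (Real.exp_ne_zero _) (ne_of_gt hEpos'), Real.log_exp]
  have hH : shannonEntropy (softmax z) = -∑ i, (Real.exp (z i) / E) * (z i - Real.log E) := by
    unfold shannonEntropy
    congr 1
    exact Finset.sum_congr rfl fun i _ => by rw [hlogsm i]; rfl
  have hCE : crossEntropyLoss z y = -∑ i, y i * (z i - Real.log E) := rfl
  have key : ∀ (w : Fin c → ℝ) (A : ℝ),
      ∑ i, w i * (z i - A) = (∑ i, w i * z i) - (∑ i, w i) * A := by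
    intro w A
    simp [mul_sub, Finset.sum_sub_distrib, Finset.sum_mul]
  have hsm_sum : (∑ i, Real.exp (z i) / E) = 1 := by
    rw [← Finset.sum_div, div_self (ne_of_gt hEpos')]
  rw [hCE, hH]
  simp only [h1E]
  rw [key y, key (fun i => Real.exp (z i) / E), key y, hy, hsm_sum]
  have : (∑ i, Real.exp (z i) / E * z i) = (∑ k, Real.exp (z k) * z k) / E := by
    rw [Finset.sum_div]
    exact Finset.sum_congr rfl fun i _ => by ring
  rw [this]
  ring


/-- **Theorem 2, first part.** For `M ≥ 1` positively homogeneous functions `F m`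
differentiable at `θ ≠ 0`, with labels `y m` each summing to one, the Euclidean norm
of the gradient at `θ` of the average loss
`ℓ_avg(θ) = (1/M) ∑ m, ℓ(F m θ, y m)` is at least
`(1/(M‖θ‖)) ∑ m, (ℓ(z m, y m) − H(p m))`, where `z m = F m θ` and `p m = softmax (z m)`. -/
theorem gradient_norm_lower_bound_avg {k c M : ℕ} (hM : 1 ≤ M)
    (F : Fin M → EuclideanSpace ℝ (Fin k) → EuclideanSpace ℝ (Fin c))
    (θ : EuclideanSpace ℝ (Fin k)) (hθ : θ ≠ 0)
    (hF : ∀ m, DifferentiableAt ℝ (F m) θ)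
    (hhom : ∀ m, PositivelyHomogeneous (F m))
    (y : Fin M → EuclideanSpace ℝ (Fin c)) (hy : ∀ m, ∑ i, y m i = 1) :
    ‖gradient (fun t => (1 / (M : ℝ)) * ∑ m, crossEntropyLoss (F m t) (y m)) θ‖ ≥
      (1 / ((M : ℝ) * ‖θ‖)) *
        ∑ m, (crossEntropyLoss (F m θ) (y m) - shannonEntropy (softmax (F m θ))) := by
  -- c must be positive
  have hc : 0 < c := by
    by_contra h
    have h0 := hy ⟨0, hM⟩
    interval_cases c
    simp at h0
  set g : EuclideanSpace ℝ (Fin k) → ℝ :=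
    fun t => (1 / (M : ℝ)) * ∑ m, crossEntropyLoss (F m t) (y m) with hg
  have hgdiff : DifferentiableAt ℝ g θ := by
    apply DifferentiableAt.const_mul
    exact DifferentiableAt.fun_sum fun m _ => (ce_diff hc (y m) (F m θ)).comp θ (hF m)
  set D : ℝ := (1 / (M : ℝ)) *
      ∑ m, (crossEntropyLoss (F m θ) (y m) - shannonEntropy (softmax (F m θ))) with hD
  -- derivative of t ↦ g (t • θ) at 1
  have hline : HasDerivAt (fun t : ℝ => t • θ) θ 1 := by
    simpa using (hasDerivAt_id (1:ℝ)).smul_const θ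
  have hcomp : HasDerivAt (fun t : ℝ => g (t • θ)) (fderiv ℝ g θ θ) 1 := by
    have h1 : HasFDerivAt g (fderiv ℝ g θ) ((1:ℝ) • θ) := by
      rw [one_smul]; exact hgdiff.hasFDerivAt
    exact h1.comp_hasDerivAt 1 hline
  have hsum : HasDerivAt (fun t : ℝ => (1 / (M : ℝ)) *
      ∑ m, crossEntropyLoss (t • F m θ) (y m)) D 1 := by
    rw [hD]
    exact (HasDerivAt.fun_sum fun m _ => ce_scal_hasDerivAt hc (F m θ) (y m) (hy m)).const_mul _
  have heq : (fun t : ℝ => (1 / (M : ℝ)) * ∑ m, crossEntropyLoss (t • F m θ) (y m))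
      =ᶠ[𝓝 (1:ℝ)] (fun t : ℝ => g (t • θ)) := by
    filter_upwards [eventually_gt_nhds one_pos] with t ht
    simp only [hg]
    congr 1
    exact Finset.sum_congr rfl fun m _ => by rw [hhom m θ t ht]
  have hD2 : HasDerivAt (fun t : ℝ => g (t • θ)) D 1 := hsum.congr_of_eventuallyEq heq.symm
  have hfd : fderiv ℝ g θ θ = D := hcomp.unique hD2
  -- gradient inner product
  have hinner : (inner ℝ (gradient g θ) θ : ℝ) = fderiv ℝ g θ θ := by
    rw [gradient]
    exact InnerProductSpace.toDual_symm_apply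
  have hCS : D ≤ ‖gradient g θ‖ * ‖θ‖ := by
    rw [← hfd, ← hinner]
    exact real_inner_le_norm _ _
  have hθn : (0:ℝ) < ‖θ‖ := norm_pos_iff.2 hθ
  have hMp : (0:ℝ) < (M:ℝ) := by exact_mod_cast hM
  rw [ge_iff_le]
  have hrw : (1 / ((M : ℝ) * ‖θ‖)) *
      ∑ m, (crossEntropyLoss (F m θ) (y m) - shannonEntropy (softmax (F m θ))) = D / ‖θ‖ := by
    rw [hD]; field_simp
  rw [hrw, div_le_iff₀ hθn]
  exact hCS
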